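/- arXiv:2505.15483 — 9 statements merged into one kernel-verified Lean document; each statement's English description precedes it below -/
import Mathlib

section
/- Let ε > 0 and define g : (0, ∞) → ℝ by g(p) = (exp(ε) − p)² / (p · (exp(ε) − 1) · exp(ε)) + p / exp(ε). Then for every p > 0, g(p) ≥ g(exp(ε/2)), with equality if and only if p = exp(ε/2). In other words, g attains its unique minimum on (0, ∞) at p = exp(ε/2). -/
open Real

/-- The function `g(p) = (e^ε − p)²/(p(e^ε − 1)e^ε) + p/e^ε` attains its unique minimum
on `(0, ∞)` at `p = e^{ε/2}`. -/
theorem optimal_probability_unique_minimum (ε : ℝ) (hε : 0 < ε) :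
    ∀ p : ℝ, 0 < p →
      ((Real.exp ε - Real.exp (ε / 2)) ^ 2 /
          (Real.exp (ε / 2) * (Real.exp ε - 1) * Real.exp ε) +
          Real.exp (ε / 2) / Real.exp ε ≤
        (Real.exp ε - p) ^ 2 / (p * (Real.exp ε - 1) * Real.exp ε) + p / Real.exp ε) ∧
      ((Real.exp ε - p) ^ 2 / (p * (Real.exp ε - 1) * Real.exp ε) + p / Real.exp ε =
          (Real.exp ε - Real.exp (ε / 2)) ^ 2 /
            (Real.exp (ε / 2) * (Real.exp ε - 1) * Real.exp ε) +
            Real.exp (ε / 2) / Real.exp ε ↔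
        p = Real.exp (ε / 2)) := by
  intro p hp
  set E := Real.exp ε with hE
  set q := Real.exp (ε / 2) with hq
  have hq0 : 0 < q := Real.exp_pos _
  have hE0 : 0 < E := Real.exp_pos _
  have hEq : E = q ^ 2 := by
    rw [hE, hq, sq, ← Real.exp_add]; norm_num
  have hE1 : 1 < E := by
    have : Real.exp 0 < Real.exp ε := Real.exp_lt_exp.mpr hε
    simpa [hE] using this
  have hden : 0 < p * (E - 1) := by
    have : 0 < E - 1 := by linarith
    positivity
  have hp' : p ≠ 0 := ne_of_gt hp
  have hq' : q ≠ 0 := ne_of_gt hq0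
  have h1' : q ^ 2 - 1 ≠ 0 := by nlinarith [hEq]
  have key : (E - p) ^ 2 / (p * (E - 1) * E) + p / E -
      ((E - q) ^ 2 / (q * (E - 1) * E) + q / E) = (p - q) ^ 2 / (p * (E - 1)) := by
    rw [hEq]
    field_simp
    ring
  constructor
  · have h1 : 0 ≤ (p - q) ^ 2 / (p * (E - 1)) := by positivity
    linarith [key]
  · constructor
    · intro h
      have h2 : (p - q) ^ 2 / (p * (E - 1)) = 0 := by linarith [key]
      have h3 : (p - q) ^ 2 = 0 := by
        rcases div_eq_zero_iff.mp h2 with h3 | h3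
        · exact h3
        · exact absurd h3 hden.ne'
      have h4 : p - q = 0 := by nlinarith [sq_nonneg (p - q)]
      linarith
    · intro h; rw [h]
end

section
/- Let ε > 0. Set p = exp(ε/2) and C = (exp(ε/2) − 1)/(2·(exp(ε) − 1)). For x ∈ [0, 1), define the interval [l_x, r_x) by: [0, 2C) if x ∈ [0, C); [x − C, x + C) if x ∈ [C, 1 − C); and [1 − 2C, 1) otherwise. Define the density f_x : [0,1) → ℝ by f_x(y) = p if y ∈ [l_x, r_x) and f_x(y) = p/exp(ε) otherwise. Then: (i) for every x ∈ [0,1), 0 ≤ l_x ≤ r_x ≤ 1 and r_x − l_x = 2C; (ii) for every x ∈ [0,1), ∫_0^1 f_x(y) dy = 1, so f_x is a probability density on [0,1); and (iii) for all x₁, x₂ ∈ [0,1) and all y ∈ [0,1), f_{x₁}(y) ≤ exp(ε) · f_{x₂}(y), i.e., the mechanism satisfies ε-LDP. -/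
open MeasureTheory Real Set

lemma gpm_integral (p q a b : ℝ) (h0 : 0 ≤ a) (hab : a ≤ b) (hb1 : b ≤ 1) :
    (∫ y in (0:ℝ)..1, (if a ≤ y ∧ y < b then p else q))
      = q * a + p * (b - a) + q * (1 - b) := by
  set F : ℝ → ℝ := fun y => if a ≤ y ∧ y < b then p else q with hF
  have hFeq : F = fun y => q + Set.indicator (Set.Ico a b) (fun _ => p - q) y := by
    funext y
    by_cases h : a ≤ y ∧ y < b <;>
      simp [F, Set.indicator, Set.mem_Ico, h] <;> ring
  have hint : ∀ u v : ℝ, IntervalIntegrable F volume u v := by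
    intro u v
    rw [hFeq]
    exact (intervalIntegrable_const).add
      ((IntegrableOn.integrable_indicator
        (integrableOn_const measure_Ico_lt_top.ne)
        measurableSet_Ico).intervalIntegrable)
  have hane : (∀ᵐ y : ℝ, y ≠ a) := by
    rw [ae_iff]; simpa using Real.volume_singleton (x := a)
  have hbne : (∀ᵐ y : ℝ, y ≠ b) := by
    rw [ae_iff]; simpa using Real.volume_singleton (x := b)
  have h1 : (∫ y in (0:ℝ)..a, F y) = q * a := by
    rw [intervalIntegral.integral_congr_ae (g := fun _ => q), intervalIntegral.integral_const]
    · simp [smul_eq_mul]; ring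
    · filter_upwards [hane] with y hy hmem
      rw [Set.uIoc_of_le h0] at hmem
      have : ¬ (a ≤ y ∧ y < b) := fun h => hy (le_antisymm hmem.2 h.1)
      simp [F, this]
  have h2 : (∫ y in a..b, F y) = p * (b - a) := by
    rw [intervalIntegral.integral_congr_ae (g := fun _ => p), intervalIntegral.integral_const]
    · simp [smul_eq_mul]; ring
    · filter_upwards [hbne] with y hy hmem
      rw [Set.uIoc_of_le hab] at hmem
      have : a ≤ y ∧ y < b := ⟨le_of_lt hmem.1, lt_of_le_of_ne hmem.2 hy⟩
      simp [F, this]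
  have h3 : (∫ y in b..(1:ℝ), F y) = q * (1 - b) := by
    rw [intervalIntegral.integral_congr_ae (g := fun _ => q), intervalIntegral.integral_const]
    · simp [smul_eq_mul]; ring
    · filter_upwards with y hmem
      rw [Set.uIoc_of_le hb1] at hmem
      have : ¬ (a ≤ y ∧ y < b) := fun h => absurd hmem.1 (not_lt.2 (le_of_lt h.2))
      simp [F, this]
  have := intervalIntegral.integral_add_adjacent_intervals (a := (0:ℝ)) (b := a) (c := b)
    (hint 0 a) (hint a b)
  have h2' := intervalIntegral.integral_add_adjacent_intervals (a := (0:ℝ)) (b := b) (c := 1)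
    ((hint 0 a).trans (hint a b)) (hint b 1)
  rw [← h2', ← this, h1, h2, h3]

/-- The closed-form optimal GPM for the classical domain `[0,1)` is a well-defined
probability density and satisfies `ε`-LDP. -/
theorem optimal_classical_gpm_wellDefined_and_ldp (ε : ℝ) (hε : 0 < ε)
    (p C : ℝ) (hp : p = Real.exp (ε / 2))
    (hC : C = (Real.exp (ε / 2) - 1) / (2 * (Real.exp ε - 1)))
    (l r : ℝ → ℝ)
    (hl : ∀ x, l x = if x < C then 0 else if x < 1 - C then x - C else 1 - 2 * C)
    (hr : ∀ x, r x = if x < C then 2 * C else if x < 1 - C then x + C else 1)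
    (f : ℝ → ℝ → ℝ)
    (hf : ∀ x y, f x y = if l x ≤ y ∧ y < r x then p else p / Real.exp ε) :
    (∀ x ∈ Set.Ico (0 : ℝ) 1,
      0 ≤ l x ∧ l x ≤ r x ∧ r x ≤ 1 ∧ r x - l x = 2 * C) ∧
    (∀ x ∈ Set.Ico (0 : ℝ) 1, (∫ y in (0 : ℝ)..1, f x y) = 1) ∧
    (∀ x₁ ∈ Set.Ico (0 : ℝ) 1, ∀ x₂ ∈ Set.Ico (0 : ℝ) 1, ∀ y ∈ Set.Ico (0 : ℝ) 1,
      f x₁ y ≤ Real.exp ε * f x₂ y) := by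
  set t := Real.exp (ε / 2) with ht
  have ht1 : 1 < t := Real.one_lt_exp_iff.2 (by linarith)
  have hee : Real.exp ε = t * t := by
    rw [ht, ← Real.exp_add]; ring_nf
  have hCval : C = 1 / (2 * (t + 1)) := by
    have h1 : t + 1 ≠ 0 := by linarith
    have h2 : Real.exp ε - 1 ≠ 0 := by rw [hee]; nlinarith
    rw [hC, hee, div_eq_div_iff (by nlinarith) (by nlinarith)]
    ring
  have hC0 : 0 < C := by rw [hCval]; positivity
  have hC4 : C < 1 / 4 := by
    rw [hCval]
    rw [div_lt_div_iff₀ (by nlinarith) (by norm_num)]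
    nlinarith
  have hpart1 : ∀ x ∈ Set.Ico (0 : ℝ) 1,
      0 ≤ l x ∧ l x ≤ r x ∧ r x ≤ 1 ∧ r x - l x = 2 * C := by
    intro x hx
    obtain ⟨hx0, hx1⟩ := hx
    rw [hl, hr]
    by_cases h1 : x < C
    · simp only [if_pos h1]
      refine ⟨le_rfl, by linarith, by linarith, by ring⟩
    · by_cases h2 : x < 1 - C
      · simp only [if_neg h1, if_pos h2]
        refine ⟨by linarith [not_lt.1 h1], by linarith, by linarith, by ring⟩
      · simp only [if_neg h1, if_neg h2]
        refine ⟨by linarith, by linarith, le_rfl, by ring⟩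
  refine ⟨hpart1, ?_, ?_⟩
  · intro x hx
    obtain ⟨h0l, hlr, hr1, hdiff⟩ := hpart1 x hx
    have heq : (∫ y in (0:ℝ)..1, f x y)
        = (p / Real.exp ε) * l x + p * (r x - l x) + (p / Real.exp ε) * (1 - r x) := by
      have := gpm_integral p (p / Real.exp ε) (l x) (r x) h0l hlr hr1
      rw [← this]
      apply intervalIntegral.integral_congr
      intro y _
      rw [hf]
    rw [heq, hdiff]
    have hrl : l x = r x - 2 * C := by linarith
    rw [hrl]
    rw [hp, hee, hCval]
    have htpos : (0:ℝ) < t := by linarith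
    field_simp
    ring
  · intro x₁ _ x₂ _ y _
    rw [hf, hf]
    have hp0 : 0 < p := by rw [hp]; exact Real.exp_pos _
    have he1 : 1 < Real.exp ε := Real.one_lt_exp_iff.2 hε
    have hkey : Real.exp ε * (p / Real.exp ε) = p := by field_simp
    split_ifs <;> nlinarith [hkey, mul_pos (lt_trans one_pos he1) hp0]
end

section
/- Let ε > 0, p = exp(ε/2), C = (exp(ε/2) − 1)/(2·(exp(ε) − 1)), and let f_x be the density of the optimal classical GPM mechanism on [0,1) (f_x(y) = p on the interval [l_x, r_x) specified by: [0,2C) if x ∈ [0,C), [x−C, x+C) if x ∈ [C, 1−C), [1−2C, 1) otherwise; and f_x(y) = p/exp(ε) elsewhere on [0,1)). Then the mean squared error MSE(x) = ∫_0^1 (y − x)² f_x(y) dy satisfies: (i) if x ∈ [0, C), MSE(x) = (p/3)·((2C − x)³ + x³) + (p/(3·exp(ε)))·((1 − x)³ − (2C − x)³); (ii) if x ∈ [C, 1 − C), MSE(x) = (p/(3·exp(ε)))·(−2C³ + 3x² − 3x + 1) + (p/3)·(2C³); (iii) if x ∈ [1 − C, 1), MSE(x) = (p/(3·exp(ε)))·((1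 − 2C − x)³ + x³) + (p/3)·((1 − x)³ − (1 − 2C − x)³). -/
open MeasureTheory Real Set

lemma const_int (x k c d : ℝ) :
    ∫ y in c..d, (y - x) ^ 2 * k = k / 3 * ((d - x) ^ 3 - (c - x) ^ 3) := by
  have h : ∫ y in c..d, (y - x) ^ 2 = ((d - x) ^ 3 - (c - x) ^ 3) / 3 := by
    have := intervalIntegral.integral_comp_sub_right (fun y => y ^ 2) x (a := c) (b := d)
    rw [this, integral_pow]
    norm_num
  rw [show (fun y => (y - x) ^ 2 * k) = fun y => k * (y - x) ^ 2 by ext y; ring]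
  rw [intervalIntegral.integral_const_mul, h]
  ring

lemma step_int (x k1 k2 a b : ℝ) (h0 : 0 ≤ a) (hab : a ≤ b) (hb1 : b ≤ 1) :
    ∫ y in (0:ℝ)..1, (y - x) ^ 2 * (if a ≤ y ∧ y < b then k1 else k2)
      = k2 / 3 * ((a - x) ^ 3 - (0 - x) ^ 3) + k1 / 3 * ((b - x) ^ 3 - (a - x) ^ 3)
        + k2 / 3 * ((1 - x) ^ 3 - (b - x) ^ 3) := by
  set F : ℝ → ℝ := fun y => (y - x) ^ 2 * (if a ≤ y ∧ y < b then k1 else k2) with hF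
  have hInt : ∀ c d : ℝ, IntervalIntegrable F volume c d := by
    intro c d
    have heq : F = fun y => Set.indicator (Set.Ico a b) (fun y => (y - x) ^ 2 * (k1 - k2)) y
        + (y - x) ^ 2 * k2 := by
      ext y
      by_cases h : a ≤ y ∧ y < b
      · simp [F, Set.indicator, Set.mem_Ico, h]; ring
      · simp [F, Set.indicator, Set.mem_Ico, h]
    rw [heq]
    have hc : Continuous fun y : ℝ => (y - x) ^ 2 * (k1 - k2) :=
      ((continuous_id.sub continuous_const).pow 2).mul continuous_const
    have hc2 : Continuous fun y : ℝ => (y - x) ^ 2 * k2 :=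
      ((continuous_id.sub continuous_const).pow 2).mul continuous_const
    have h1 := hc.intervalIntegrable (μ := volume) c d
    have h2 : IntervalIntegrable (fun y => Set.indicator (Set.Ico a b)
        (fun y => (y - x) ^ 2 * (k1 - k2)) y) volume c d :=
      ⟨h1.1.indicator measurableSet_Ico, h1.2.indicator measurableSet_Ico⟩
    exact h2.add (hc2.intervalIntegrable c d)
  have split : ∫ y in (0:ℝ)..1, F y = (∫ y in (0:ℝ)..a, F y) + (∫ y in a..b, F y) + ∫ y in b..1, F y := by
    rw [intervalIntegral.integral_add_adjacent_intervals (hInt 0 a) (hInt a b),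
      intervalIntegral.integral_add_adjacent_intervals (hInt 0 b) (hInt b 1)]
  have hane : ∀ᵐ y : ℝ, y ≠ a := by
    rw [ae_iff]
    simp only [not_not]
    simpa using measure_singleton (α := ℝ) a
  have hbne : ∀ᵐ y : ℝ, y ≠ b := by
    rw [ae_iff]
    simp only [not_not]
    simpa using measure_singleton (α := ℝ) b
  have e1 : ∫ y in (0:ℝ)..a, F y = ∫ y in (0:ℝ)..a, (y - x) ^ 2 * k2 := by
    apply intervalIntegral.integral_congr_ae
    filter_upwards [hane] with y hy hmem
    rw [Set.uIoc_of_le h0, Set.mem_Ioc] at hmem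
    simp only [F]
    rw [if_neg]
    rintro ⟨h1, -⟩
    exact hy (le_antisymm hmem.2 h1)
  have e2 : ∫ y in a..b, F y = ∫ y in a..b, (y - x) ^ 2 * k1 := by
    apply intervalIntegral.integral_congr_ae
    filter_upwards [hbne] with y hy hmem
    rw [Set.uIoc_of_le hab, Set.mem_Ioc] at hmem
    simp only [F]
    rw [if_pos ⟨hmem.1.le, lt_of_le_of_ne hmem.2 hy⟩]
  have e3 : ∫ y in b..(1:ℝ), F y = ∫ y in b..(1:ℝ), (y - x) ^ 2 * k2 := by
    apply intervalIntegral.integral_congr_ae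
    filter_upwards with y hmem
    rw [Set.uIoc_of_le hb1, Set.mem_Ioc] at hmem
    simp only [F]
    rw [if_neg]
    rintro ⟨-, h2⟩
    exact absurd hmem.1 (not_lt.2 h2.le)
  calc ∫ y in (0:ℝ)..1, F y = _ := split
    _ = _ := by rw [e1, e2, e3, const_int, const_int, const_int]

/-- Closed-form MSE of the optimal classical GPM on `[0,1)`, in three cases according to
the position of the input `x`. -/
theorem optimal_classical_gpm_mse (ε : ℝ) (hε : 0 < ε)
    (p C : ℝ) (hp : p = Real.exp (ε / 2))
    (hC : C = (Real.exp (ε / 2) - 1) / (2 * (Real.exp ε - 1)))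
    (l r : ℝ → ℝ)
    (hl : ∀ x, l x = if x < C then 0 else if x < 1 - C then x - C else 1 - 2 * C)
    (hr : ∀ x, r x = if x < C then 2 * C else if x < 1 - C then x + C else 1)
    (f : ℝ → ℝ → ℝ)
    (hf : ∀ x y, f x y = if l x ≤ y ∧ y < r x then p else p / Real.exp ε)
    (MSE : ℝ → ℝ) (hMSE : ∀ x, MSE x = ∫ y in (0 : ℝ)..1, (y - x) ^ 2 * f x y) :
    (∀ x ∈ Set.Ico (0 : ℝ) C,
      MSE x = p / 3 * ((2 * C - x) ^ 3 + x ^ 3) +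
        p / (3 * Real.exp ε) * ((1 - x) ^ 3 - (2 * C - x) ^ 3)) ∧
    (∀ x ∈ Set.Ico C (1 - C),
      MSE x = p / (3 * Real.exp ε) * (-2 * C ^ 3 + 3 * x ^ 2 - 3 * x + 1) +
        p / 3 * (2 * C ^ 3)) ∧
    (∀ x ∈ Set.Ico (1 - C) (1 : ℝ),
      MSE x = p / (3 * Real.exp ε) * ((1 - 2 * C - x) ^ 3 + x ^ 3) +
        p / 3 * ((1 - x) ^ 3 - (1 - 2 * C - x) ^ 3)) := by
  have hs1 : 1 < Real.exp (ε / 2) := by rw [Real.one_lt_exp_iff]; positivity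
  have hC2 : C = 1 / (2 * (Real.exp (ε / 2) + 1)) := by
    have he : Real.exp ε = Real.exp (ε / 2) ^ 2 := by rw [← Real.exp_nat_mul]; ring_nf
    rw [hC, he, div_eq_div_iff (by nlinarith) (by nlinarith)]
    ring
  have hCpos : 0 < C := by rw [hC2]; positivity
  have hC1 : 2 * C ≤ 1 := by
    rw [hC2, mul_one_div, div_le_one (by nlinarith)]
    nlinarith
  have hene : Real.exp ε ≠ 0 := Real.exp_ne_zero ε
  refine ⟨?_, ?_, ?_⟩
  · rintro x ⟨hx0, hx1⟩
    have hlx : l x = 0 := by rw [hl, if_pos hx1]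
    have hrx : r x = 2 * C := by rw [hr, if_pos hx1]
    have : MSE x = ∫ y in (0 : ℝ)..1, (y - x) ^ 2 *
        (if (0:ℝ) ≤ y ∧ y < 2 * C then p else p / Real.exp ε) := by
      rw [hMSE]
      simp only [hf, hlx, hrx]
    rw [this, step_int x p (p / Real.exp ε) 0 (2 * C) le_rfl (by linarith) hC1]
    field_simp
    ring
  · rintro x ⟨hx0, hx1⟩
    have hnx : ¬ x < C := not_lt.2 hx0
    have hlx : l x = x - C := by rw [hl, if_neg hnx, if_pos hx1]
    have hrx : r x = x + C := by rw [hr, if_neg hnx, if_pos hx1]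
    have : MSE x = ∫ y in (0 : ℝ)..1, (y - x) ^ 2 *
        (if x - C ≤ y ∧ y < x + C then p else p / Real.exp ε) := by
      rw [hMSE]
      simp only [hf, hlx, hrx]
    rw [this, step_int x p (p / Real.exp ε) (x - C) (x + C) (by linarith) (by linarith)
      (by linarith)]
    field_simp
    ring
  · rintro x ⟨hx0, hx1⟩
    have hnx : ¬ x < C := by push_neg; linarith
    have hnx2 : ¬ x < 1 - C := not_lt.2 hx0
    have hlx : l x = 1 - 2 * C := by rw [hl, if_neg hnx, if_neg hnx2]
    have hrx : r x = 1 := by rw [hr, if_neg hnx, if_neg hnx2]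
    have : MSE x = ∫ y in (0 : ℝ)..1, (y - x) ^ 2 *
        (if 1 - 2 * C ≤ y ∧ y < 1 then p else p / Real.exp ε) := by
      rw [hMSE]
      simp only [hf, hlx, hrx]
    rw [this, step_int x p (p / Real.exp ε) (1 - 2 * C) 1 (by linarith) (by linarith) le_rfl]
    field_simp
    ring
end

section
/- Let ε > 0. Set p = exp(ε/2)/(2π) and C = π·(exp(ε/2) − 1)/(exp(ε) − 1). Define the circular distance d(y, x) = min(|y − x|, 2π − |y − x|) for y, x ∈ [0, 2π), and define the density f_x : [0, 2π) → ℝ by f_x(y) = p if d(y, x) < C and f_x(y) = p/exp(ε) otherwise. Then: (i) for every x ∈ [0, 2π), ∫_0^{2π} f_x(y) dy = 1, so f_x is a probability density on [0, 2π); and (ii) for all x₁, x₂ ∈ [0, 2π) and all y ∈ [0, 2π), f_{x₁}(y) ≤ exp(ε) · f_{x₂}(y), i.e., the mechanism satisfies ε-LDP. -/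
open MeasureTheory Real Set

lemma gpm_integral_const_on_Ioo (g : ℝ → ℝ) (a b c : ℝ) (hab : a ≤ b)
    (h : ∀ y ∈ Set.Ioo a b, g y = c) :
    ∫ y in a..b, g y = (b - a) * c := by
  have h2 : (∫ y in a..b, g y) = ∫ y in a..b, (fun _ => c) y := by
    apply intervalIntegral.integral_congr_ae
    rw [MeasureTheory.ae_iff]
    refine MeasureTheory.measure_mono_null ?_ (measure_singleton b)
    intro y hy
    simp only [Set.mem_setOf_eq, Classical.not_imp] at hy
    obtain ⟨hmem, hne⟩ := hy
    rw [Set.uIoc_of_le hab] at hmem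
    simp only [Set.mem_singleton_iff]
    by_contra hyb
    exact hne (h y ⟨hmem.1, lt_of_le_of_ne hmem.2 hyb⟩)
  rw [h2, intervalIntegral.integral_const, smul_eq_mul]

/-- The closed-form optimal GPM for the circular domain `[0, 2π)` is a probability density
and satisfies `ε`-LDP. -/
theorem optimal_circular_gpm_wellDefined_and_ldp (ε : ℝ) (hε : 0 < ε)
    (p C : ℝ) (hp : p = Real.exp (ε / 2) / (2 * Real.pi))
    (hC : C = Real.pi * (Real.exp (ε / 2) - 1) / (Real.exp ε - 1))
    (d : ℝ → ℝ → ℝ) (hd : ∀ y x, d y x = min |y - x| (2 * Real.pi - |y - x|))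
    (f : ℝ → ℝ → ℝ)
    (hf : ∀ x y, f x y = if d y x < C then p else p / Real.exp ε) :
    (∀ x ∈ Set.Ico (0 : ℝ) (2 * Real.pi),
      (∫ y in (0 : ℝ)..(2 * Real.pi), f x y) = 1) ∧
    (∀ x₁ ∈ Set.Ico (0 : ℝ) (2 * Real.pi), ∀ x₂ ∈ Set.Ico (0 : ℝ) (2 * Real.pi),
      ∀ y ∈ Set.Ico (0 : ℝ) (2 * Real.pi), f x₁ y ≤ Real.exp ε * f x₂ y) := by
  have hπ : (0:ℝ) < Real.pi := Real.pi_pos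
  have hE1 : 1 < Real.exp (ε / 2) := Real.one_lt_exp_iff.mpr (by linarith)
  have hexp : Real.exp ε = Real.exp (ε / 2) ^ 2 := by
    rw [sq, ← Real.exp_add]; congr 1; ring
  have hEpos : 0 < Real.exp (ε / 2) := by linarith
  have hCval : C = Real.pi / (Real.exp (ε / 2) + 1) := by
    rw [hC, hexp, div_eq_div_iff (by nlinarith) (by nlinarith)]
    ring
  have hC0 : 0 < C := by rw [hCval]; positivity
  have hCπ : C < Real.pi := by
    rw [hCval]
    rw [div_lt_iff₀ (by linarith)]
    nlinarith
  have hp0 : 0 < p := by rw [hp]; positivity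
  have hEε : 1 < Real.exp ε := Real.one_lt_exp_iff.mpr hε
  have hEε0 : 0 < Real.exp ε := by linarith
  -- the key total-mass identity
  have hfinal : 2 * C * p + (2 * Real.pi - 2 * C) * (p / Real.exp ε) = 1 := by
    rw [hCval, hp, hexp]
    field_simp
    ring
  constructor
  · intro x hx
    obtain ⟨hx0, hx2π⟩ := hx
    -- measurability and integrability of f x
    have hfx : f x = fun y => if min |y - x| (2 * Real.pi - |y - x|) < C then p
        else p / Real.exp ε := by
      funext y; rw [hf, hd]
    have hmeas : Measurable (f x) := by
      rw [hfx]
      apply Measurable.ite _ measurable_const measurable_const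
      apply measurableSet_lt _ measurable_const
      have hcont : Continuous fun y : ℝ => min |y - x| (2 * Real.pi - |y - x|) := by
        apply Continuous.min
        · exact (continuous_id.sub continuous_const).abs
        · exact continuous_const.sub (continuous_id.sub continuous_const).abs
      exact hcont.measurable
    have hint : ∀ a b : ℝ, IntervalIntegrable (f x) volume a b := by
      intro a b
      have hbdd : ∀ s : Set ℝ, IntegrableOn (f x) s volume → True := fun _ _ => trivial
      constructor <;>
      · apply Measure.integrableOn_of_bounded (M := max |p| |p / Real.exp ε|)
        · exact ((measure_Ioc_lt_top).ne)
        · exact hmeas.aestronglyMeasurable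
        · filter_upwards with y
          rw [hfx]
          dsimp only
          split_ifs
          · exact le_max_left _ _
          · exact le_max_right _ _
    -- helper to compute on a subinterval
    have hsplit : ∀ a b : ℝ,
        (∫ y in (0:ℝ)..a, f x y) + (∫ y in a..b, f x y) + (∫ y in b..(2*Real.pi), f x y)
          = ∫ y in (0:ℝ)..(2*Real.pi), f x y := by
      intro a b
      rw [intervalIntegral.integral_add_adjacent_intervals (hint 0 a) (hint a b),
        intervalIntegral.integral_add_adjacent_intervals (hint 0 b) (hint b (2*Real.pi))]
    set q := p / Real.exp ε with hq
    rcases lt_or_ge x C with hcase1 | hge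
    · -- 0 ≤ x < C : wrap on the left
      have e1 : (∫ y in (0:ℝ)..(x + C), f x y) = (x + C) * p := by
        have := gpm_integral_const_on_Ioo (f x) 0 (x + C) p (by linarith) ?_
        · rw [this]; ring
        intro y ⟨hy1, hy2⟩
        rw [hf, hd, if_pos]
        apply min_lt_iff.mpr
        left
        exact abs_lt.mpr ⟨by linarith, by linarith⟩
      have e2 : (∫ y in (x + C)..(x + 2*Real.pi - C), f x y) = (2*Real.pi - 2*C) * q := by
        have := gpm_integral_const_on_Ioo (f x) (x + C) (x + 2*Real.pi - C) q
          (by linarith) ?_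
        · rw [this]; ring
        intro y ⟨hy1, hy2⟩
        rw [hf, hd, if_neg]
        push_neg
        have hyx : |y - x| = y - x := abs_of_pos (by linarith)
        rw [hyx]
        exact le_min (by linarith) (by linarith)
      have e3 : (∫ y in (x + 2*Real.pi - C)..(2*Real.pi), f x y) = (C - x) * p := by
        have := gpm_integral_const_on_Ioo (f x) (x + 2*Real.pi - C) (2*Real.pi) p
          (by linarith) ?_
        · rw [this]; ring
        intro y ⟨hy1, hy2⟩
        rw [hf, hd, if_pos]
        apply min_lt_iff.mpr
        right
        have : y - x ≤ |y - x| := le_abs_self _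
        linarith
      rw [← hsplit (x + C) (x + 2*Real.pi - C), e1, e2, e3]
      calc (x + C) * p + (2*Real.pi - 2*C) * q + (C - x) * p
          = 2 * C * p + (2 * Real.pi - 2 * C) * q := by ring
        _ = 1 := hfinal
    · rcases le_or_gt x (2*Real.pi - C) with hcase2 | hcase3
      · -- C ≤ x ≤ 2π − C : no wrap
        have e1 : (∫ y in (0:ℝ)..(x - C), f x y) = (x - C) * q := by
          have := gpm_integral_const_on_Ioo (f x) 0 (x - C) q (by linarith) ?_
          · rw [this]; ring
          intro y ⟨hy1, hy2⟩
          rw [hf, hd, if_neg]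
          push_neg
          have hyx : |y - x| = x - y := by
            rw [abs_sub_comm]; exact abs_of_pos (by linarith)
          rw [hyx]
          exact le_min (by linarith) (by linarith)
        have e2 : (∫ y in (x - C)..(x + C), f x y) = 2 * C * p := by
          have := gpm_integral_const_on_Ioo (f x) (x - C) (x + C) p (by linarith) ?_
          · rw [this]; ring
          intro y ⟨hy1, hy2⟩
          rw [hf, hd, if_pos]
          apply min_lt_iff.mpr
          left
          exact abs_lt.mpr ⟨by linarith, by linarith⟩
        have e3 : (∫ y in (x + C)..(2*Real.pi), f x y) = (2*Real.pi - x - C) * q := by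
          have := gpm_integral_const_on_Ioo (f x) (x + C) (2*Real.pi) q (by linarith) ?_
          · rw [this]; ring
          intro y ⟨hy1, hy2⟩
          rw [hf, hd, if_neg]
          push_neg
          have hyx : |y - x| = y - x := abs_of_pos (by linarith)
          rw [hyx]
          exact le_min (by linarith) (by linarith)
        rw [← hsplit (x - C) (x + C), e1, e2, e3]
        calc (x - C) * q + 2 * C * p + (2*Real.pi - x - C) * q
            = 2 * C * p + (2 * Real.pi - 2 * C) * q := by ring
          _ = 1 := hfinal
      · -- 2π − C < x < 2π : wrap on the right
        have e1 : (∫ y in (0:ℝ)..(x - 2*Real.pi + C), f x y) = (x - 2*Real.pi + C) * p := by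
          have := gpm_integral_const_on_Ioo (f x) 0 (x - 2*Real.pi + C) p
            (by linarith) ?_
          · rw [this]; ring
          intro y ⟨hy1, hy2⟩
          rw [hf, hd, if_pos]
          apply min_lt_iff.mpr
          right
          have : -(y - x) ≤ |y - x| := neg_le_abs _
          linarith
        have e2 : (∫ y in (x - 2*Real.pi + C)..(x - C), f x y) = (2*Real.pi - 2*C) * q := by
          have := gpm_integral_const_on_Ioo (f x) (x - 2*Real.pi + C) (x - C) q
            (by linarith) ?_
          · rw [this]; ring
          intro y ⟨hy1, hy2⟩
          rw [hf, hd, if_neg]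
          push_neg
          have hyx : |y - x| = x - y := by
            rw [abs_sub_comm]; exact abs_of_pos (by linarith)
          rw [hyx]
          exact le_min (by linarith) (by linarith)
        have e3 : (∫ y in (x - C)..(2*Real.pi), f x y) = (2*Real.pi - x + C) * p := by
          have := gpm_integral_const_on_Ioo (f x) (x - C) (2*Real.pi) p
            (by linarith) ?_
          · rw [this]; ring
          intro y ⟨hy1, hy2⟩
          rw [hf, hd, if_pos]
          apply min_lt_iff.mpr
          left
          exact abs_lt.mpr ⟨by linarith, by linarith⟩
        rw [← hsplit (x - 2*Real.pi + C) (x - C), e1, e2, e3]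
        calc (x - 2*Real.pi + C) * p + (2*Real.pi - 2*C) * q + (2*Real.pi - x + C) * p
            = 2 * C * p + (2 * Real.pi - 2 * C) * q := by ring
          _ = 1 := hfinal
  · intro x₁ _ x₂ _ y _
    have hEε : 1 < Real.exp ε := Real.one_lt_exp_iff.mpr hε
    have hEε0 : 0 < Real.exp ε := by linarith
    have hkey : Real.exp ε * (p / Real.exp ε) = p := by field_simp
    rw [hf, hf]
    split_ifs
    · nlinarith
    · rw [hkey]
    · have : p / Real.exp ε ≤ p := by
        rw [div_le_iff₀ hEε0]; nlinarith
      nlinarith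
    · nlinarith [div_pos hp0 hEε0]
end

section
/- Let ε > 0, p = exp(ε/2)/(2π), C = π·(exp(ε/2) − 1)/(exp(ε) − 1), and let f_x : [0, 2π) → ℝ be the circular OGPM density: f_x(y) = p if min(|y − x|, 2π − |y − x|) < C, else p/exp(ε). Then for every x ∈ [0, 2π): (i) ∫_0^{2π} sin(y − x) · f_x(y) dy = 0; and (ii) ∫_0^{2π} cos(y − x) · f_x(y) dy = 2·sin(C)·(p − p/exp(ε)) > 0. Consequently, the circular mean direction of the output distribution equals x, i.e., the mechanism is unbiased in the circular sense. -/
open MeasureTheory Real Set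

/-- The optimal circular GPM is circularly unbiased: the sine moment about the input `x`
vanishes and the cosine moment about `x` is positive, so the circular mean direction of the
output distribution is `x`. -/
theorem optimal_circular_gpm_unbiased (ε : ℝ) (hε : 0 < ε)
    (p C : ℝ) (hp : p = Real.exp (ε / 2) / (2 * Real.pi))
    (hC : C = Real.pi * (Real.exp (ε / 2) - 1) / (Real.exp ε - 1))
    (f : ℝ → ℝ → ℝ)
    (hf : ∀ x y, f x y =
      if min |y - x| (2 * Real.pi - |y - x|) < C then p else p / Real.exp ε) :
    ∀ x ∈ Set.Ico (0 : ℝ) (2 * Real.pi),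
      (∫ y in (0 : ℝ)..(2 * Real.pi), Real.sin (y - x) * f x y) = 0 ∧
      (∫ y in (0 : ℝ)..(2 * Real.pi), Real.cos (y - x) * f x y) =
        2 * Real.sin C * (p - p / Real.exp ε) ∧
      0 < (∫ y in (0 : ℝ)..(2 * Real.pi), Real.cos (y - x) * f x y) := by
  intro x hx
  obtain ⟨hx0, hx2⟩ := hx
  have hπ : 0 < Real.pi := Real.pi_pos
  set q : ℝ := p / Real.exp ε with hq
  set u : ℝ := Real.exp (ε / 2) with hu
  have hu1 : 1 < u := by
    rw [hu, show (1:ℝ) = Real.exp 0 by simp]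
    exact Real.exp_lt_exp.mpr (by linarith)
  have hexp : Real.exp ε = u * u := by
    rw [hu, ← Real.exp_add]; ring_nf
  -- C = π / (u + 1)
  have hC' : C = Real.pi / (u + 1) := by
    rw [hC, hexp]
    have h1 : u - 1 ≠ 0 := by linarith
    have h2 : u + 1 ≠ 0 := by linarith
    have h3 : u * u - 1 ≠ 0 := by nlinarith
    field_simp
    rw [div_eq_one_iff_eq (by rw [sq]; exact h3)]; ring
  have hC0 : 0 < C := by
    rw [hC']; positivity
  have hCπ : C < Real.pi := by
    rw [hC']
    rw [div_lt_iff₀ (by linarith : (0:ℝ) < u + 1)]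
    nlinarith [mul_pos hπ (show (0:ℝ) < u by linarith)]
  have hp0 : 0 < p := by
    rw [hp]; positivity
  have hq0 : 0 < q := by
    rw [hq]; positivity
  have hqp : q < p := by
    have h1 : 1 < Real.exp ε := by rw [hexp]; nlinarith
    rw [hq, div_lt_iff₀ (Real.exp_pos ε)]
    nlinarith
  -- the shifted density
  set g : ℝ → ℝ := fun t => if min |t| (2 * Real.pi - |t|) < C then p else q with hg
  have hfg : ∀ y, f x y = g (y - x) := by
    intro y; rw [hf x y]
  have hg_meas : Measurable g := by
    apply Measurable.ite _ measurable_const measurable_const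
    exact measurableSet_lt (by fun_prop) measurable_const
  -- integrability of trig * g on any interval
  have hInt : ∀ (trig : ℝ → ℝ), Measurable trig → (∀ t, |trig t| ≤ 1) →
      ∀ a b : ℝ, IntervalIntegrable (fun t => trig t * g t) volume a b := by
    intro trig htm htb a b
    apply (intervalIntegrable_const (c := max p q)).mono_fun
      ((htm.mul hg_meas).aestronglyMeasurable)
    refine Filter.Eventually.of_forall fun t => ?_
    have h1 : |g t| ≤ max p q := by
      simp only [hg]
      split_ifs
      · rw [abs_of_pos hp0]; exact le_max_left _ _
      · rw [abs_of_pos hq0]; exact le_max_right _ _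
    have h2 : ‖trig t * g t‖ ≤ 1 * (max p q) := by
      rw [norm_mul]
      exact mul_le_mul (htb t) h1 (abs_nonneg _) zero_le_one
    simpa [abs_of_pos (lt_max_of_lt_left hp0)] using h2
  -- g agrees with its shift by 2π on [0, 2π]
  have hg_shift : ∀ t ∈ Set.Icc (0:ℝ) (2 * Real.pi), g (t - 2 * Real.pi) = g t := by
    intro t ⟨ht0, ht2⟩
    have h1 : |t - 2 * Real.pi| = 2 * Real.pi - t := by
      rw [abs_of_nonpos (by linarith)]; ring
    have h2 : |t| = t := abs_of_nonneg ht0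
    simp only [hg]
    rw [h1, h2]
    have h3 : min (2 * Real.pi - t) (2 * Real.pi - (2 * Real.pi - t)) = min t (2 * Real.pi - t) := by
      rw [min_comm]; ring_nf
    rw [h3]
  -- key: shift-invariance of the full-period integral
  have hkey : ∀ (trig : ℝ → ℝ), Measurable trig → (∀ t, |trig t| ≤ 1) →
      (∀ t, trig (t - 2 * Real.pi) = trig t) →
      (∫ y in (0:ℝ)..(2 * Real.pi), trig (y - x) * g (y - x)) =
        ∫ t in (0:ℝ)..(2 * Real.pi), trig t * g t := by
    intro trig htm htb hper
    set G : ℝ → ℝ := fun t => trig t * g t with hG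
    have hGint : ∀ a b : ℝ, IntervalIntegrable G volume a b := hInt trig htm htb
    have step1 : (∫ y in (0:ℝ)..(2 * Real.pi), G (y - x)) =
        ∫ t in (0 - x)..(2 * Real.pi - x), G t :=
      intervalIntegral.integral_comp_sub_right G x
    have step2 : (∫ t in (0 - x)..(2 * Real.pi - x), G t) =
        (∫ t in (0 - x)..(0:ℝ), G t) + ∫ t in (0:ℝ)..(2 * Real.pi - x), G t :=
      (intervalIntegral.integral_add_adjacent_intervals (hGint _ _) (hGint _ _)).symm
    have step3 : (∫ t in (0 - x)..(0:ℝ), G t) =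
        ∫ t in (2 * Real.pi - x)..(2 * Real.pi), G t := by
      have h1 : (∫ t in (2 * Real.pi - x)..(2 * Real.pi), G (t - 2 * Real.pi)) =
          ∫ t in (2 * Real.pi - x - 2 * Real.pi)..(2 * Real.pi - 2 * Real.pi), G t :=
        intervalIntegral.integral_comp_sub_right G (2 * Real.pi)
      have h2 : (∫ t in (2 * Real.pi - x)..(2 * Real.pi), G (t - 2 * Real.pi)) =
          ∫ t in (2 * Real.pi - x)..(2 * Real.pi), G t := by
        apply intervalIntegral.integral_congr
        intro t ht
        have hsub : Set.uIcc (2 * Real.pi - x) (2 * Real.pi) ⊆ Set.Icc 0 (2 * Real.pi) := by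
          rw [Set.uIcc_of_le (by linarith)]
          apply Set.Icc_subset_Icc (by linarith) le_rfl
        have htmem := hsub ht
        simp only [hG]
        rw [hper t, hg_shift t htmem]
      rw [← h2, h1]
      norm_num
    rw [step1, step2, step3, add_comm]
    exact intervalIntegral.integral_add_adjacent_intervals (hGint _ _) (hGint _ _)
  -- piecewise evaluation of ∫₀^{2π} trig * g
  have hsplit : ∀ (trig : ℝ → ℝ), Measurable trig → (∀ t, |trig t| ≤ 1) →
      (∫ t in (0:ℝ)..(2 * Real.pi), trig t * g t) =
        (∫ t in (0:ℝ)..C, trig t) * p + (∫ t in C..(2 * Real.pi - C), trig t) * q +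
        (∫ t in (2 * Real.pi - C)..(2 * Real.pi), trig t) * p := by
    intro trig htm htb
    have hGint : ∀ a b : ℝ, IntervalIntegrable (fun t => trig t * g t) volume a b :=
      hInt trig htm htb
    have e1 : (∫ t in (0:ℝ)..C, trig t * g t) = (∫ t in (0:ℝ)..C, trig t) * p := by
      rw [← intervalIntegral.integral_mul_const]
      apply intervalIntegral.integral_congr_ae
      have hne : ∀ᵐ t : ℝ, t ≠ C := (Set.countable_singleton C).ae_notMem volume
      filter_upwards [hne] with t htne htmem
      rw [Set.uIoc_of_le hC0.le] at htmem
      obtain ⟨ht0, htC⟩ := htmem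
      have htC' : t < C := lt_of_le_of_ne htC htne
      have hcond : min |t| (2 * Real.pi - |t|) < C :=
        calc min |t| (2 * Real.pi - |t|) ≤ |t| := min_le_left _ _
          _ = t := abs_of_pos ht0
          _ < C := htC'
      simp only [hg]
      rw [if_pos hcond]
    have e2 : (∫ t in C..(2 * Real.pi - C), trig t * g t) =
        (∫ t in C..(2 * Real.pi - C), trig t) * q := by
      rw [← intervalIntegral.integral_mul_const]
      apply intervalIntegral.integral_congr
      intro t ht
      rw [Set.uIcc_of_le (by linarith)] at ht
      obtain ⟨ht1, ht2⟩ := ht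
      have habs : |t| = t := abs_of_pos (lt_of_lt_of_le hC0 ht1)
      have hcond : ¬ min |t| (2 * Real.pi - |t|) < C := by
        push_neg
        rw [habs]
        exact le_min ht1 (by linarith)
      simp only [hg]
      rw [if_neg hcond]
    have e3 : (∫ t in (2 * Real.pi - C)..(2 * Real.pi), trig t * g t) =
        (∫ t in (2 * Real.pi - C)..(2 * Real.pi), trig t) * p := by
      rw [← intervalIntegral.integral_mul_const]
      apply intervalIntegral.integral_congr_ae
      have hne : ∀ᵐ t : ℝ, t ≠ 2 * Real.pi - C :=
        (Set.countable_singleton _).ae_notMem volume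
      filter_upwards [hne] with t htne htmem
      rw [Set.uIoc_of_le (by linarith)] at htmem
      obtain ⟨ht1, ht2⟩ := htmem
      have habs : |t| = t := abs_of_pos (by linarith)
      have hcond : min |t| (2 * Real.pi - |t|) < C :=
        calc min |t| (2 * Real.pi - |t|) ≤ 2 * Real.pi - |t| := min_le_right _ _
          _ = 2 * Real.pi - t := by rw [habs]
          _ < C := by linarith
      simp only [hg]
      rw [if_pos hcond]
    calc (∫ t in (0:ℝ)..(2 * Real.pi), trig t * g t)
        = (∫ t in (0:ℝ)..C, trig t * g t) + (∫ t in C..(2 * Real.pi - C), trig t * g t) +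
          (∫ t in (2 * Real.pi - C)..(2 * Real.pi), trig t * g t) := by
          rw [intervalIntegral.integral_add_adjacent_intervals (hGint _ _) (hGint _ _),
            intervalIntegral.integral_add_adjacent_intervals (hGint _ _) (hGint _ _)]
      _ = _ := by rw [e1, e2, e3]
  -- now compute the two moments
  have hsin_b : ∀ t : ℝ, |Real.sin t| ≤ 1 := fun t => abs_sin_le_one t
  have hcos_b : ∀ t : ℝ, |Real.cos t| ≤ 1 := fun t => abs_cos_le_one t
  have hsin_per : ∀ t : ℝ, Real.sin (t - 2 * Real.pi) = Real.sin t := by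
    intro t; rw [Real.sin_sub]; simp [Real.sin_two_pi, Real.cos_two_pi]
  have hcos_per : ∀ t : ℝ, Real.cos (t - 2 * Real.pi) = Real.cos t := by
    intro t; rw [Real.cos_sub]; simp [Real.sin_two_pi, Real.cos_two_pi]
  have hcos2C : Real.cos (2 * Real.pi - C) = Real.cos C := by
    rw [Real.cos_sub]; simp [Real.sin_two_pi, Real.cos_two_pi]
  have hsin2C : Real.sin (2 * Real.pi - C) = -Real.sin C := by
    rw [Real.sin_sub]; simp [Real.sin_two_pi, Real.cos_two_pi]
  have hsin_eq : (∫ y in (0:ℝ)..(2 * Real.pi), Real.sin (y - x) * f x y) = 0 := by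
    have : (∫ y in (0:ℝ)..(2 * Real.pi), Real.sin (y - x) * f x y) =
        ∫ y in (0:ℝ)..(2 * Real.pi), Real.sin (y - x) * g (y - x) := by
      apply intervalIntegral.integral_congr
      intro y _
      simp only [hfg]
    rw [this, hkey Real.sin Real.measurable_sin hsin_b hsin_per,
      hsplit Real.sin Real.measurable_sin hsin_b, integral_sin, integral_sin, integral_sin,
      hcos2C, Real.cos_zero, Real.cos_two_pi]
    ring
  have hcos_eq : (∫ y in (0:ℝ)..(2 * Real.pi), Real.cos (y - x) * f x y) =
      2 * Real.sin C * (p - q) := by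
    have : (∫ y in (0:ℝ)..(2 * Real.pi), Real.cos (y - x) * f x y) =
        ∫ y in (0:ℝ)..(2 * Real.pi), Real.cos (y - x) * g (y - x) := by
      apply intervalIntegral.integral_congr
      intro y _
      simp only [hfg]
    rw [this, hkey Real.cos Real.measurable_cos hcos_b hcos_per,
      hsplit Real.cos Real.measurable_cos hcos_b, integral_cos, integral_cos, integral_cos,
      hsin2C, Real.sin_zero, Real.sin_two_pi]
    ring
  have hpos : 0 < 2 * Real.sin C * (p - q) := by
    have hsC : 0 < Real.sin C := Real.sin_pos_of_pos_of_lt_pi hC0 hCπ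
    have := sub_pos.mpr hqp
    positivity
  exact ⟨hsin_eq, by rw [hcos_eq], by rw [hcos_eq]; exact hpos⟩
end

section
/- Let ε > 0, p = exp(ε/2)/(2π), C = π·(exp(ε/2) − 1)/(exp(ε) − 1), and let f_x : [0, 2π) → ℝ be the circular OGPM density: f_x(y) = p if d(y, x) < C, else p/exp(ε), where d(y, x) = min(|y − x|, 2π − |y − x|). Then for every x ∈ [0, 2π), the circular mean squared error satisfies ∫_0^{2π} d(y, x)² · f_x(y) dy = (2/3) · ( (π³ − C³) · p/exp(ε) + C³ · p ). In particular, this value is the same for all x ∈ [0, 2π). -/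
open MeasureTheory Real Set

/-- The circular MSE of the optimal circular GPM is independent of the input `x` and has the
closed form `(2/3)·((π³ − C³)·p/e^ε + C³·p)`. -/
theorem optimal_circular_gpm_mse (ε : ℝ) (hε : 0 < ε)
    (p C : ℝ) (hp : p = Real.exp (ε / 2) / (2 * Real.pi))
    (hC : C = Real.pi * (Real.exp (ε / 2) - 1) / (Real.exp ε - 1))
    (d : ℝ → ℝ → ℝ) (hd : ∀ y x, d y x = min |y - x| (2 * Real.pi - |y - x|))
    (f : ℝ → ℝ → ℝ)
    (hf : ∀ x y, f x y = if d y x < C then p else p / Real.exp ε) :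
    ∀ x ∈ Set.Ico (0 : ℝ) (2 * Real.pi),
      (∫ y in (0 : ℝ)..(2 * Real.pi), (d y x) ^ 2 * f x y) =
        2 / 3 * ((Real.pi ^ 3 - C ^ 3) * (p / Real.exp ε) + C ^ 3 * p) := by
  intro x hx
  obtain ⟨hx0, hx2⟩ := hx
  have hπ := Real.pi_pos
  have he1 : (1 : ℝ) < Real.exp (ε / 2) := by
    rw [Real.one_lt_exp_iff]; linarith
  have hee : Real.exp ε = Real.exp (ε / 2) * Real.exp (ε / 2) := by
    rw [← Real.exp_add]; ring_nf
  have hq0 : 0 < p / Real.exp ε := by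
    rw [hp]
    positivity
  have hp0 : 0 < p := by rw [hp]; positivity
  have hqp : p / Real.exp ε ≤ p := by
    have h1e : (1:ℝ) ≤ Real.exp ε := by
      rw [← Real.exp_zero]
      exact Real.exp_le_exp.mpr hε.le
    rw [div_le_iff₀ (Real.exp_pos ε)]
    nlinarith
  -- C = π / (exp(ε/2) + 1)
  have hC' : C = Real.pi / (Real.exp (ε / 2) + 1) := by
    rw [hC, hee]
    rw [div_eq_div_iff (by nlinarith) (by nlinarith)]
    ring
  have hC0 : 0 < C := by rw [hC']; positivity
  have hCπ : C < Real.pi := by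
    rw [hC']
    rw [div_lt_iff₀ (by nlinarith)]
    nlinarith
  set q : ℝ := p / Real.exp ε with hqdef
  set φ : ℝ → ℝ := fun t =>
    (min |t| (2 * Real.pi - |t|)) ^ 2 *
      (if min |t| (2 * Real.pi - |t|) < C then p else q) with hφ
  have heq : ∀ y : ℝ, (d y x) ^ 2 * f x y = φ (y - x) := by
    intro y
    rw [hf, hd]
  -- measurability of φ
  have hmeas : Measurable φ := by
    apply Measurable.mul
    · exact ((continuous_abs.min (continuous_const.sub continuous_abs)).pow 2).measurable
    · exact Measurable.ite
        (measurableSet_lt (continuous_abs.min (continuous_const.sub continuous_abs)).measurable measurable_const)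
        measurable_const measurable_const
  -- integrability of φ on any interval
  have hφint : ∀ a b : ℝ, IntervalIntegrable φ volume a b := by
    intro a b
    have hcont : IntervalIntegrable (fun t : ℝ => t ^ 2 * p) volume a b :=
      ((continuous_pow 2).mul continuous_const : Continuous fun t : ℝ => t ^ 2 * p).intervalIntegrable a b
    refine hcont.mono_fun hmeas.aestronglyMeasurable ?_
    filter_upwards with t
    simp only [Real.norm_eq_abs, hφ]
    have habs : |t| ^ 2 = t ^ 2 := sq_abs t
    have hm1 : min |t| (2 * Real.pi - |t|) ≤ |t| := min_le_left _ _
    have hm2 : -|t| ≤ min |t| (2 * Real.pi - |t|) := by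
      apply le_min
      · linarith [abs_nonneg t]
      · linarith [abs_nonneg t]
    have hmsq : (min |t| (2 * Real.pi - |t|)) ^ 2 ≤ t ^ 2 := by
      rw [← habs]
      exact sq_le_sq' hm2 hm1
    have hifb : |if min |t| (2 * Real.pi - |t|) < C then p else q| ≤ p := by
      split
      · rw [abs_of_pos hp0]
      · rw [abs_of_pos hq0]; exact hqp
    rw [abs_mul]
    calc |(min |t| (2 * Real.pi - |t|)) ^ 2| * |if min |t| (2 * Real.pi - |t|) < C then p else q|
        ≤ t ^ 2 * p := by
          apply mul_le_mul _ hifb (abs_nonneg _) (sq_nonneg t)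
          rw [abs_of_nonneg (sq_nonneg _)]
          exact hmsq
      _ ≤ |t ^ 2 * p| := le_abs_self _
  have hne : ∀ c : ℝ, ∀ᵐ t : ℝ, t ≠ c := by
    intro c
    have h0 : (volume : Measure ℝ) {c} = 0 := measure_singleton c
    filter_upwards [MeasureTheory.measure_eq_zero_iff_ae_notMem.mp h0] with t ht
    simpa using ht
  -- piece 1 : [0, C]
  have h1 : (∫ t in (0:ℝ)..C, φ t) = C ^ 3 / 3 * p := by
    have : (∫ t in (0:ℝ)..C, φ t) = ∫ t in (0:ℝ)..C, t ^ 2 * p := by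
      apply intervalIntegral.integral_congr_ae
      filter_upwards [hne C] with t htC hmem
      rw [Set.uIoc_of_le hC0.le] at hmem
      have h0t : 0 < t := hmem.1
      have htC' : t < C := lt_of_le_of_ne hmem.2 htC
      simp only [hφ]
      rw [abs_of_pos h0t]
      have hmin : min t (2 * Real.pi - t) = t := min_eq_left (by linarith)
      rw [hmin, if_pos htC']
    rw [this, intervalIntegral.integral_mul_const, integral_pow]
    norm_num
  -- piece 2 : [C, π]
  have h2 : (∫ t in C..Real.pi, φ t) = (Real.pi ^ 3 - C ^ 3) / 3 * q := by
    have : (∫ t in C..Real.pi, φ t) = ∫ t in C..Real.pi, t ^ 2 * q := by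
      apply intervalIntegral.integral_congr
      intro t hmem
      rw [Set.uIcc_of_le hCπ.le] at hmem
      have h0t : 0 < t := lt_of_lt_of_le hC0 hmem.1
      simp only [hφ]
      rw [abs_of_pos h0t]
      have hmin : min t (2 * Real.pi - t) = t := min_eq_left (by linarith [hmem.2])
      rw [hmin, if_neg (not_lt.mpr hmem.1)]
    rw [this, intervalIntegral.integral_mul_const, integral_pow]
    norm_num
  -- piece 3 : [π, 2π - C]
  have h3 : (∫ t in Real.pi..(2 * Real.pi - C), φ t) = (Real.pi ^ 3 - C ^ 3) / 3 * q := by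
    have hstep : (∫ t in Real.pi..(2 * Real.pi - C), φ t)
        = ∫ t in Real.pi..(2 * Real.pi - C), (fun u => u ^ 2 * q) (2 * Real.pi - t) := by
      apply intervalIntegral.integral_congr
      intro t hmem
      rw [Set.uIcc_of_le (by linarith)] at hmem
      have h0t : 0 < t := lt_of_lt_of_le hπ hmem.1
      simp only [hφ]
      rw [abs_of_pos h0t]
      have hmin : min t (2 * Real.pi - t) = 2 * Real.pi - t := min_eq_right (by linarith [hmem.1])
      rw [hmin, if_neg (not_lt.mpr (by linarith [hmem.2]))]
    rw [hstep, intervalIntegral.integral_comp_sub_left (fun u => u ^ 2 * q) (2 * Real.pi)]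
    have e1 : 2 * Real.pi - (2 * Real.pi - C) = C := by ring
    have e2 : 2 * Real.pi - Real.pi = Real.pi := by ring
    rw [e1, e2, intervalIntegral.integral_mul_const, integral_pow]
    norm_num
  -- piece 4 : [2π - C, 2π]
  have h4 : (∫ t in (2 * Real.pi - C)..(2 * Real.pi), φ t) = C ^ 3 / 3 * p := by
    have hstep : (∫ t in (2 * Real.pi - C)..(2 * Real.pi), φ t)
        = ∫ t in (2 * Real.pi - C)..(2 * Real.pi), (fun u => u ^ 2 * p) (2 * Real.pi - t) := by
      apply intervalIntegral.integral_congr_ae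
      filter_upwards [hne (2 * Real.pi - C)] with t htC hmem
      rw [Set.uIoc_of_le (by linarith)] at hmem
      have h0t : 0 < t := by linarith [hmem.1]
      have hlt : 2 * Real.pi - C < t := hmem.1
      simp only [hφ]
      rw [abs_of_pos h0t]
      have hmin : min t (2 * Real.pi - t) = 2 * Real.pi - t := min_eq_right (by linarith)
      rw [hmin, if_pos (by linarith)]
    rw [hstep, intervalIntegral.integral_comp_sub_left (fun u => u ^ 2 * p) (2 * Real.pi)]
    have e1 : 2 * Real.pi - 2 * Real.pi = 0 := by ring
    have e2 : 2 * Real.pi - (2 * Real.pi - C) = C := by ring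
    rw [e1, e2, intervalIntegral.integral_mul_const, integral_pow]
    norm_num
  -- full integral over [0, 2π]
  have hfull : (∫ t in (0:ℝ)..(2 * Real.pi), φ t)
      = 2 / 3 * ((Real.pi ^ 3 - C ^ 3) * q + C ^ 3 * p) := by
    have s1 : (∫ t in (0:ℝ)..C, φ t) + (∫ t in C..Real.pi, φ t)
        = ∫ t in (0:ℝ)..Real.pi, φ t :=
      intervalIntegral.integral_add_adjacent_intervals (hφint _ _) (hφint _ _)
    have s2 : (∫ t in (0:ℝ)..Real.pi, φ t) + (∫ t in Real.pi..(2 * Real.pi - C), φ t)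
        = ∫ t in (0:ℝ)..(2 * Real.pi - C), φ t :=
      intervalIntegral.integral_add_adjacent_intervals (hφint _ _) (hφint _ _)
    have s3 : (∫ t in (0:ℝ)..(2 * Real.pi - C), φ t)
        + (∫ t in (2 * Real.pi - C)..(2 * Real.pi), φ t)
        = ∫ t in (0:ℝ)..(2 * Real.pi), φ t :=
      intervalIntegral.integral_add_adjacent_intervals (hφint _ _) (hφint _ _)
    rw [← s3, ← s2, ← s1, h1, h2, h3, h4]
    ring
  -- main chain
  calc (∫ y in (0:ℝ)..(2 * Real.pi), (d y x) ^ 2 * f x y)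
      = ∫ y in (0:ℝ)..(2 * Real.pi), φ (y - x) := by
        apply intervalIntegral.integral_congr
        intro y _
        exact heq y
    _ = ∫ t in (0 - x)..(2 * Real.pi - x), φ t :=
        intervalIntegral.integral_comp_sub_right φ x
    _ = (∫ t in (0 - x)..(0:ℝ), φ t) + ∫ t in (0:ℝ)..(2 * Real.pi - x), φ t :=
        (intervalIntegral.integral_add_adjacent_intervals (hφint _ _) (hφint _ _)).symm
    _ = (∫ t in (2 * Real.pi - x)..(2 * Real.pi), φ t)
        + ∫ t in (0:ℝ)..(2 * Real.pi - x), φ t := by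
        congr 1
        have hper : (∫ t in (0 - x)..(0:ℝ), φ t)
            = ∫ t in (0 - x)..(0:ℝ), φ (t + 2 * Real.pi) := by
          apply intervalIntegral.integral_congr
          intro t hmem
          rw [Set.uIcc_of_le (by linarith)] at hmem
          have ht1 : -(2 * Real.pi) < t := by
            have := hmem.1; simp only [zero_sub] at this; linarith
          have ht2 : t ≤ 0 := hmem.2
          simp only [hφ]
          have ha1 : |t| = -t := abs_of_nonpos ht2
          have ha2 : |t + 2 * Real.pi| = t + 2 * Real.pi := abs_of_nonneg (by linarith)
          rw [ha1, ha2]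
          have : min (-t) (2 * Real.pi - -t) = min (t + 2 * Real.pi) (2 * Real.pi - (t + 2 * Real.pi)) := by
            rw [min_comm]
            congr 1 <;> ring
          rw [this]
        rw [hper, intervalIntegral.integral_comp_add_right φ (2 * Real.pi)]
        congr 1 <;> ring
    _ = ∫ t in (0:ℝ)..(2 * Real.pi), φ t := by
        rw [add_comm]
        exact intervalIntegral.integral_add_adjacent_intervals (hφint _ _) (hφint _ _)
    _ = 2 / 3 * ((Real.pi ^ 3 - C ^ 3) * (p / Real.exp ε) + C ^ 3 * p) := hfull
end

section
/- Let ε > 0 and set C = (exp(ε/2) + 1)/(exp(ε/2) − 1), p = exp(ε/2)/(2C + 1). For x ∈ [0, 1), define l_x = ((C+1)/2)·x − (3C+1)(C−1)/(4C) and r_x = ((C+1)/2)·x + (C+1)(C−1)/(4C), and define the density f_x on the output domain [−C, C + 1) by f_x(y) = p if y ∈ [l_x, r_x) and f_x(y) = p/exp(ε) otherwise. Then: (i) for every x ∈ [0,1), −C ≤ l_x ≤ r_x ≤ C + 1 and r_x − l_x = (2C+1)(C−1)/(2C); (ii) ∫_{−C}^{C+1} f_x(y) dy = 1, so f_x is a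 probability density; (iii) for all x₁, x₂ ∈ [0,1) and all y ∈ [−C, C+1), f_{x₁}(y) ≤ exp(ε)·f_{x₂}(y), i.e., the mechanism satisfies ε-LDP; and (iv) for every x ∈ [0,1), ∫_{−C}^{C+1} y · f_x(y) dy = x, i.e., the mechanism is unbiased. -/
open MeasureTheory Real Set

lemma gpm_split_integral (a l r b : ℝ) (hal : a ≤ l) (hlr : l ≤ r) (hrb : r ≤ b)
    (g h : ℝ → ℝ) (hg : Continuous g) (hh : Continuous h) :
    (∫ y in a..b, if l ≤ y ∧ y < r then g y else h y)
      = ((∫ y in a..l, h y) + (∫ y in l..r, g y)) + (∫ y in r..b, h y) := by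
  set F : ℝ → ℝ := fun y => if l ≤ y ∧ y < r then g y else h y with hF
  have hF_eq : F = fun y => h y + (Set.Ico l r).indicator (fun y => g y - h y) y := by
    funext y
    by_cases hy : l ≤ y ∧ y < r
    · simp [hF, hy, Set.indicator_of_mem, Set.mem_Ico]
    · simp [hF, hy, Set.indicator_of_notMem, Set.mem_Ico]
  have hind : Integrable ((Set.Ico l r).indicator (fun y => g y - h y)) volume := by
    refine IntegrableOn.integrable_indicator ?_ measurableSet_Ico
    exact ((hg.sub hh).integrableOn_Icc).mono_set Set.Ico_subset_Icc_self
  have hFi : ∀ u v : ℝ, IntervalIntegrable F volume u v := by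
    intro u v
    rw [hF_eq]
    exact (hh.intervalIntegrable u v).add hind.intervalIntegrable
  have hsplit : (∫ y in a..b, F y)
      = (∫ y in a..l, F y) + ((∫ y in l..r, F y) + (∫ y in r..b, F y)) := by
    rw [intervalIntegral.integral_add_adjacent_intervals (hFi l r) (hFi r b),
      intervalIntegral.integral_add_adjacent_intervals (hFi a l) (hFi l b)]
  have hane : ∀ c : ℝ, ∀ᵐ (y : ℝ), y ≠ c := by
    intro c
    rw [ae_iff]
    simp
  have h1 : (∫ y in a..l, F y) = ∫ y in a..l, h y := by
    refine intervalIntegral.integral_congr_ae ?_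
    filter_upwards [hane l] with y hy hmem
    rw [Set.uIoc_of_le hal] at hmem
    have : ¬ (l ≤ y ∧ y < r) := fun hc => hy (le_antisymm hmem.2 hc.1)
    simp [hF, this]
  have h2 : (∫ y in l..r, F y) = ∫ y in l..r, g y := by
    refine intervalIntegral.integral_congr_ae ?_
    filter_upwards [hane r] with y hy hmem
    rw [Set.uIoc_of_le hlr] at hmem
    have : l ≤ y ∧ y < r := ⟨le_of_lt hmem.1, lt_of_le_of_ne hmem.2 hy⟩
    simp [hF, this]
  have h3 : (∫ y in r..b, F y) = ∫ y in r..b, h y := by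
    refine intervalIntegral.integral_congr_ae ?_
    filter_upwards [] with y hmem
    rw [Set.uIoc_of_le hrb] at hmem
    have : ¬ (l ≤ y ∧ y < r) := fun hc => absurd hmem.1 (not_lt.mpr (le_of_lt hc.2))
    simp [hF, this]
  rw [hsplit, h1, h2, h3]; ring

set_option maxHeartbeats 1000000 in
/-- The closed-form optimal unbiased GPM for mean estimation on `[0,1)` with enlarged output
domain `[−C, C+1)`: it is a well-defined probability density, satisfies `ε`-LDP, and is
unbiased. -/
theorem optimal_unbiased_gpm (ε : ℝ) (hε : 0 < ε)
    (C p : ℝ) (hC : C = (Real.exp (ε / 2) + 1) / (Real.exp (ε / 2) - 1))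
    (hp : p = Real.exp (ε / 2) / (2 * C + 1))
    (l r : ℝ → ℝ)
    (hl : ∀ x, l x = (C + 1) / 2 * x - (3 * C + 1) * (C - 1) / (4 * C))
    (hr : ∀ x, r x = (C + 1) / 2 * x + (C + 1) * (C - 1) / (4 * C))
    (f : ℝ → ℝ → ℝ)
    (hf : ∀ x y, f x y = if l x ≤ y ∧ y < r x then p else p / Real.exp ε) :
    (∀ x ∈ Set.Ico (0 : ℝ) 1,
      -C ≤ l x ∧ l x ≤ r x ∧ r x ≤ C + 1 ∧
        r x - l x = (2 * C + 1) * (C - 1) / (2 * C)) ∧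
    (∀ x ∈ Set.Ico (0 : ℝ) 1, (∫ y in (-C)..(C + 1), f x y) = 1) ∧
    (∀ x₁ ∈ Set.Ico (0 : ℝ) 1, ∀ x₂ ∈ Set.Ico (0 : ℝ) 1,
      ∀ y ∈ Set.Ico (-C) (C + 1), f x₁ y ≤ Real.exp ε * f x₂ y) ∧
    (∀ x ∈ Set.Ico (0 : ℝ) 1, (∫ y in (-C)..(C + 1), y * f x y) = x) := by
  have he1 : 1 < Real.exp (ε / 2) := by
    rw [Real.one_lt_exp_iff]; linarith
  have hC1 : 1 < C := by
    rw [hC, lt_div_iff₀ (by linarith)]; linarith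
  have hCm1 : (0:ℝ) < C - 1 := by linarith
  have hC0 : (0:ℝ) < C := by linarith
  have h2C1 : (0:ℝ) < 2 * C + 1 := by linarith
  have h1 : C * (Real.exp (ε / 2) - 1) = Real.exp (ε / 2) + 1 := by
    rw [hC]; exact div_mul_cancel₀ _ (by linarith)
  have hkey : Real.exp (ε / 2) * (C - 1) = C + 1 := by linear_combination h1
  have hEe : Real.exp (ε / 2) = (C + 1) / (C - 1) := by
    rw [eq_div_iff (ne_of_gt hCm1)]; exact hkey
  have hEε : Real.exp ε = (C + 1) ^ 2 / (C - 1) ^ 2 := by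
    rw [show ε = ε / 2 + ε / 2 by ring, Real.exp_add, hEe]; field_simp
  have hp' : p = (C + 1) / ((C - 1) * (2 * C + 1)) := by
    rw [hp, hEe, div_div]
  have hp0 : 0 < p := by rw [hp']; positivity
  have hexp1 : 1 ≤ Real.exp ε := Real.one_le_exp (le_of_lt hε)
  have hexp0 : 0 < Real.exp ε := Real.exp_pos ε
  -- bounds (part i)
  have key : ∀ x ∈ Set.Ico (0:ℝ) 1,
      -C ≤ l x ∧ l x ≤ r x ∧ r x ≤ C + 1 ∧
        r x - l x = (2 * C + 1) * (C - 1) / (2 * C) := by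
    intro x hx
    obtain ⟨hx0, hx1⟩ := hx
    have hrl : r x - l x = (2 * C + 1) * (C - 1) / (2 * C) := by
      rw [hl, hr]; field_simp; ring
    have hlx : -C ≤ l x := by
      rw [hl]
      have h2 : (3 * C + 1) * (C - 1) / (4 * C) ≤ C := by
        rw [div_le_iff₀ (by positivity)]; nlinarith
      have h3 : 0 ≤ (C + 1) / 2 * x := by positivity
      linarith
    have hlr : l x ≤ r x := by
      have : 0 ≤ (2 * C + 1) * (C - 1) / (2 * C) := by positivity
      linarith [hrl]
    have hrx : r x ≤ C + 1 := by
      rw [hr]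
      have h2 : (C + 1) / 2 * x ≤ (C + 1) / 2 := by nlinarith
      have h3 : (C + 1) * (C - 1) / (4 * C) ≤ (C + 1) / 2 := by
        rw [div_le_iff₀ (by positivity)]; nlinarith
      linarith
    exact ⟨hlx, hlr, hrx, hrl⟩
  refine ⟨key, ?_, ?_, ?_⟩
  · -- density integrates to 1
    intro x hx
    obtain ⟨hlx, hlr, hrx, hrl⟩ := key x hx
    simp only [hf]
    rw [gpm_split_integral (-C) (l x) (r x) (C+1) hlx hlr hrx
      (fun _ => p) (fun _ => p / Real.exp ε) continuous_const continuous_const]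
    simp only [intervalIntegral.integral_const, smul_eq_mul]
    rw [hl, hr, hp', hEε]
    field_simp
    ring
  · -- LDP
    intro x₁ _ x₂ _ y _
    rw [hf, hf]
    have hq : p / Real.exp ε * Real.exp ε = p := div_mul_cancel₀ p (ne_of_gt hexp0)
    have hd : 0 < p / Real.exp ε := by positivity
    split_ifs <;> nlinarith [hq, hd, hp0, hexp1]
  · -- unbiased
    intro x hx
    obtain ⟨hlx, hlr, hrx, hrl⟩ := key x hx
    simp only [hf, mul_ite]
    rw [gpm_split_integral (-C) (l x) (r x) (C+1) hlx hlr hrx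
      (fun y => y * p) (fun y => y * (p / Real.exp ε))
      (continuous_id.mul continuous_const) (continuous_id.mul continuous_const)]
    simp only [intervalIntegral.integral_mul_const, integral_id]
    rw [hl, hr, hp', hEε]
    field_simp
    ring
end

section
/- Let ε > 0, p > 0, and set q = p/exp(ε). Let 0 < s < 1 and let x ∈ [s/2, 1 − s/2]. For l ∈ [max(0, x − s), min(x, 1 − s)], define E(l) = q·∫_0^{l} (x − y) dy + p·∫_{l}^{x} (x − y) dy + p·∫_{x}^{l+s} (y − x) dy + q·∫_{l+s}^{1} (y − x) dy. Then E is minimized at l = x − s/2; i.e., for all admissible l, E(l) ≥ E(x − s/2). -/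
open MeasureTheory Real Set

/-- Optimal placement of the central interval: the expected absolute error `E(l)` of a
3-piecewise density with central interval `[l, l+s)` is minimized at `l = x − s/2`. -/
theorem optimal_central_interval_placement (ε p : ℝ) (hε : 0 < ε) (hp : 0 < p)
    (s x : ℝ) (hs0 : 0 < s) (hs1 : s < 1)
    (hx : x ∈ Set.Icc (s / 2) (1 - s / 2))
    (q : ℝ) (hq : q = p / Real.exp ε)
    (E : ℝ → ℝ)
    (hE : ∀ l, E l = q * (∫ y in (0 : ℝ)..l, x - y) + p * (∫ y in l..x, x - y) +
      p * (∫ y in x..(l + s), y - x) + q * (∫ y in (l + s)..(1 : ℝ), y - x)) :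
    ∀ l ∈ Set.Icc (max 0 (x - s)) (min x (1 - s)), E (x - s / 2) ≤ E l := by
  have hint1 : ∀ a b : ℝ, (∫ y in a..b, x - y) = x * (b - a) - (b ^ 2 - a ^ 2) / 2 := by
    intro a b
    have : (∫ y in a..b, x - y) = (∫ _ in a..b, x) - ∫ y in a..b, y := by
      rw [← intervalIntegral.integral_sub intervalIntegrable_const
        intervalIntegral.intervalIntegrable_id]
    rw [this, intervalIntegral.integral_const]
    rw [integral_id]
    simp only [smul_eq_mul]
    ring
  have hint2 : ∀ a b : ℝ, (∫ y in a..b, y - x) = (b ^ 2 - a ^ 2) / 2 - x * (b - a) := by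
    intro a b
    have : (∫ y in a..b, y - x) = (∫ y in a..b, y) - ∫ _ in a..b, x := by
      rw [← intervalIntegral.integral_sub intervalIntegral.intervalIntegrable_id
        intervalIntegrable_const]
    rw [this, intervalIntegral.integral_const]
    rw [integral_id]
    simp only [smul_eq_mul]
    ring
  have hqp : q < p := by
    rw [hq]
    have h1 : 1 < Real.exp ε := by simpa using Real.exp_lt_exp.mpr hε
    rw [div_lt_iff₀ (by linarith)]
    nlinarith
  intro l _
  rw [hE l, hE (x - s / 2)]
  simp only [hint1, hint2]
  nlinarith [sq_nonneg (l - (x - s / 2)), hqp.le]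
end

section
/- Let ε > 0 and x ∈ [0, 1]. Then ∫_0^1 |y − x| · (ε / (1 − exp(−ε))) · exp(−ε·|y − x|) dy = ( 2 − (1 + ε·x)·exp(−ε·x) − (1 + ε·(1 − x))·exp(−ε·(1 − x)) ) / ( ε · (1 − exp(−ε)) ). -/
open MeasureTheory Real Set

lemma texp_integral (ε : ℝ) (hε : ε ≠ 0) (a : ℝ) :
    ∫ t in (0:ℝ)..a, t * Real.exp (-ε * t)
      = (1 - (1 + ε * a) * Real.exp (-ε * a)) / ε ^ 2 := by
  have key : ∀ t : ℝ, HasDerivAt (fun t => -((t / ε + 1 / ε ^ 2) * Real.exp (-ε * t)))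
      (t * Real.exp (-ε * t)) t := by
    intro t
    have h1 : HasDerivAt (fun t : ℝ => -ε * t) (-ε) t := by
      simpa using (hasDerivAt_id t).const_mul (-ε)
    have h2 : HasDerivAt (fun t : ℝ => Real.exp (-ε * t))
        (Real.exp (-ε * t) * (-ε)) t := h1.exp
    have h3 : HasDerivAt (fun t : ℝ => t / ε + 1 / ε ^ 2) (1 / ε) t := by
      exact ((hasDerivAt_id t).div_const ε).add_const (1 / ε ^ 2)
    have h4 := (h3.mul h2).neg
    refine h4.congr_deriv ?_
    field_simp
    ring
  rw [intervalIntegral.integral_eq_sub_of_hasDerivAt (fun t _ => key t)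
    (by apply Continuous.intervalIntegrable; continuity)]
  simp only [Real.exp_zero, mul_zero, zero_div]
  field_simp
  ring

/-- Closed-form expected absolute (`L₁`) error of the bounded Laplace (B-Laplace) mechanism
with scale `b = 1/ε` on the domain `[0,1)` at input `x`. -/
theorem bounded_laplace_expected_L1_error (ε x : ℝ) (hε : 0 < ε)
    (hx : x ∈ Set.Icc (0 : ℝ) 1) :
    (∫ y in (0 : ℝ)..1,
        |y - x| * (ε / (1 - Real.exp (-ε))) * Real.exp (-ε * |y - x|)) =
      (2 - (1 + ε * x) * Real.exp (-ε * x) -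
        (1 + ε * (1 - x)) * Real.exp (-ε * (1 - x))) /
        (ε * (1 - Real.exp (-ε))) := by
  obtain ⟨hx0, hx1⟩ := hx
  have hD : 0 < 1 - Real.exp (-ε) := by
    have : Real.exp (-ε) < 1 := Real.exp_lt_one_iff.mpr (by linarith)
    linarith
  have hrw : (fun y : ℝ => |y - x| * (ε / (1 - Real.exp (-ε))) * Real.exp (-ε * |y - x|))
      = fun y => (ε / (1 - Real.exp (-ε))) * (|y - x| * Real.exp (-ε * |y - x|)) := by
    funext y; ring
  rw [hrw, intervalIntegral.integral_const_mul]
  have cont : Continuous (fun y : ℝ => |y - x| * Real.exp (-ε * |y - x|)) := by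
    continuity
  rw [← intervalIntegral.integral_add_adjacent_intervals (a := (0:ℝ)) (b := x) (c := 1)
      (cont.intervalIntegrable _ _) (cont.intervalIntegrable _ _)]
  have h1 : (∫ y in (0:ℝ)..x, |y - x| * Real.exp (-ε * |y - x|))
      = ∫ y in (0:ℝ)..x, (x - y) * Real.exp (-ε * (x - y)) := by
    apply intervalIntegral.integral_congr
    intro y hy
    rw [Set.uIcc_of_le hx0] at hy
    have habs : |y - x| = x - y := by
      rw [abs_of_nonpos (by linarith [hy.2])]; ring
    simp only [habs]
  have h2 : (∫ y in x..(1:ℝ), |y - x| * Real.exp (-ε * |y - x|))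
      = ∫ y in x..(1:ℝ), (y - x) * Real.exp (-ε * (y - x)) := by
    apply intervalIntegral.integral_congr
    intro y hy
    rw [Set.uIcc_of_le hx1] at hy
    have habs : |y - x| = y - x := abs_of_nonneg (by linarith [hy.1])
    simp only [habs]
  have s1 : (∫ y in (0:ℝ)..x, (x - y) * Real.exp (-ε * (x - y)))
      = ∫ t in (0:ℝ)..x, t * Real.exp (-ε * t) := by
    have := intervalIntegral.integral_comp_sub_left (a := (0:ℝ)) (b := x)
      (fun t => t * Real.exp (-ε * t)) x
    simpa using this
  have s2 : (∫ y in x..(1:ℝ), (y - x) * Real.exp (-ε * (y - x)))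
      = ∫ t in (0:ℝ)..(1 - x), t * Real.exp (-ε * t) := by
    have := intervalIntegral.integral_comp_sub_right (a := x) (b := (1:ℝ))
      (fun t => t * Real.exp (-ε * t)) x
    simpa using this
  rw [h1, h2, s1, s2, texp_integral ε hε.ne' x, texp_integral ε hε.ne' (1 - x)]
  field_simp
  ring
end
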